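/- Let G be a finite group of diagonal linear automorphisms of C^2, where a general element has the form φ(x,y) = (l^a x, l^b y) with l a primitive n-th root of unity (n the order of φ) and gcd(a,b,n)=1. Suppose there exists an integer u such that a ≡ bu (mod n) for every element of G (with its corresponding a, b, n). Then G is cyclic, and G has a generator of the form ψ(x,y) = (ζ^u x, ζ y) for some root of unity ζ. -/

import Mathlib

/-!
Write an element `φ` of order `n` as `(lᵃ, lᵇ)` with `l` a primitive `n`-th root of unity; then
`gcd(a, b, n) = 1` holds automatically, so the hypothesis gives `lᵃ = l^(bu)`, i.e. `φ = (φ₂ᵘ, φ₂)`.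
Hence `H` is the graph of `y ↦ yᵘ` over its second projection, a finite subgroup of `ℂˣ` and so
cyclic, generated by some `ζ`; then `(ζᵘ, ζ)` generates `H`.
-/

theorem exists_orderOf_eq_and_zpowers_eq_rootsOfUnity {R : Type*} [CommRing R] [IsDomain R]
    (n : ℕ) [NeZero n] [HasEnoughRootsOfUnity R n] :
    ∃ l : Rˣ, orderOf l = n ∧ Subgroup.zpowers l = rootsOfUnity n R := by
  obtain ⟨ζ, hζ⟩ := HasEnoughRootsOfUnity.exists_primitiveRoot R n
  have hl := hζ.isUnit_unit (NeZero.ne n)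
  exact ⟨_, hl.eq_orderOf.symm, hl.zpowers_eq⟩

theorem gcd_gcd_eq_one_of_orderOf_zpow_prodMk {G : Type*} [Group G] {l : G} {n : ℕ} (hn : 0 < n)
    (hl : orderOf l = n) {a b : ℤ} (hab : orderOf (l ^ a, l ^ b) = n) :
    Int.gcd (Int.gcd a b : ℤ) n = 1 := by
  set d := Int.gcd (Int.gcd a b : ℤ) n
  obtain ⟨m, hm⟩ : d ∣ n := Int.ofNat_dvd.1 (Int.gcd_dvd_right _ _)
  have hd_dvd : ∀ c : ℤ, (Int.gcd a b : ℤ) ∣ c → (l ^ c) ^ m = 1 := fun c hc => by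
    rw [← zpow_natCast, ← zpow_mul, ← orderOf_dvd_iff_zpow_eq_one, hl, hm, Nat.cast_mul]
    exact mul_dvd_mul_right ((Int.gcd_dvd_left _ _).trans hc) _
  have hn_dvd : n ∣ m := hab ▸ orderOf_dvd_of_pow_eq_one (by
    rw [Prod.pow_mk, hd_dvd a (Int.gcd_dvd_left _ _), hd_dvd b (Int.gcd_dvd_right _ _),
      Prod.mk_one_one])
  have hm_pos : 0 < m := Nat.pos_of_mul_pos_left (hm ▸ hn)
  have := Nat.le_of_dvd hm_pos hn_dvd
  nlinarith

theorem exists_zpow_eq_of_isOfFinOrder {φ : ℂˣ × ℂˣ} (hφ : IsOfFinOrder φ) :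
    ∃ (l : ℂˣ) (a b : ℤ), orderOf l = orderOf φ ∧ φ.1 = l ^ a ∧ φ.2 = l ^ b ∧
      Int.gcd (Int.gcd a b : ℤ) (orderOf φ) = 1 := by
  have hn := hφ.orderOf_pos
  have : NeZero (orderOf φ) := ⟨hn.ne'⟩
  obtain ⟨l, hl, hzp⟩ := exists_orderOf_eq_and_zpowers_eq_rootsOfUnity (R := ℂ) (orderOf φ)
  have hroot : ∀ x : ℂˣ, x ^ orderOf φ = 1 → ∃ c : ℤ, x = l ^ c := fun x hx => by
    obtain ⟨c, hc⟩ := Subgroup.mem_zpowers_iff.1 (hzp ▸ (mem_rootsOfUnity _ x).2 hx)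
    exact ⟨c, hc.symm⟩
  have hpow := pow_orderOf_eq_one φ
  obtain ⟨a, ha⟩ := hroot φ.1 (by rw [← Prod.pow_fst, hpow, Prod.fst_one])
  obtain ⟨b, hb⟩ := hroot φ.2 (by rw [← Prod.pow_snd, hpow, Prod.snd_one])
  refine ⟨l, a, b, hl, ha, hb, gcd_gcd_eq_one_of_orderOf_zpow_prodMk hn hl ?_⟩
  rw [← ha, ← hb]

theorem Subgroup.zpowers_zpow_prodMk_eq {G : Type*} [Group G] {H : Subgroup (G × G)} {u : ℤ}
    (hH : ∀ φ ∈ H, φ.1 = φ.2 ^ u) {g : G} (hg : Subgroup.zpowers g = H.map (MonoidHom.snd G G)) :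
    Subgroup.zpowers (g ^ u, g) = H := by
  apply le_antisymm
  · obtain ⟨ψ, hψ, hψg⟩ := Subgroup.mem_map.1 (hg ▸ Subgroup.mem_zpowers g)
    have hψ_eq : ψ = (g ^ u, g) := Prod.ext (hψg ▸ hH ψ hψ) hψg
    exact Subgroup.zpowers_le.2 (hψ_eq ▸ hψ)
  · intro φ hφ
    obtain ⟨m, hm⟩ := Subgroup.mem_zpowers_iff.1 (hg ▸ Subgroup.mem_map_of_mem _ hφ)
    replace hm : g ^ m = φ.2 := hm
    refine Subgroup.mem_zpowers_iff.2 ⟨m, Prod.ext ?_ hm⟩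
    change (g ^ u) ^ m = φ.1
    rw [hH φ hφ, ← hm, ← zpow_mul, ← zpow_mul, mul_comm]

/-- A finite diagonal linear group on `ℂ²` (encoded as a subgroup of `ℂˣ × ℂˣ`) all of whose
elements `φ(x,y) = (lᵃx, lᵇy)` (with `l` a primitive `n`-th root of unity, `n = ord(φ)`,
`gcd(a,b,n)=1`) satisfy `a ≡ bu (mod n)` for a fixed integer `u`, is cyclic with a generator
of the form `ψ(x,y) = (ζᵘ x, ζ y)` for some root of unity `ζ`. -/
theorem stmt3 (u : ℤ) (H : Subgroup (ℂˣ × ℂˣ)) [Finite H]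
    (hcong : ∀ φ ∈ H, ∀ (n : ℕ) (l : ℂˣ) (a b : ℤ),
      0 < n → orderOf φ = n → orderOf l = n → φ.1 = l ^ a → φ.2 = l ^ b →
      Int.gcd (Int.gcd a b : ℤ) (n : ℤ) = 1 → (n : ℤ) ∣ (a - b * u)) :
    ∃ ζ : ℂˣ, (∃ k : ℕ, 0 < k ∧ ζ ^ k = 1) ∧
      Subgroup.zpowers ((ζ ^ u, ζ) : ℂˣ × ℂˣ) = H := by
  have hfin : ∀ φ ∈ H, IsOfFinOrder φ := fun φ hφ =>
    Submonoid.isOfFinOrder_coe.2 (isOfFinOrder_of_finite (⟨φ, hφ⟩ : H))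
  have hH : ∀ φ ∈ H, φ.1 = φ.2 ^ u := fun φ hφ => by
    obtain ⟨l, a, b, hl, ha, hb, hgcd⟩ := exists_zpow_eq_of_isOfFinOrder (hfin φ hφ)
    have hdvd := hcong φ hφ _ l a b (hfin φ hφ).orderOf_pos rfl hl ha hb hgcd
    rw [ha, hb, ← zpow_mul, zpow_eq_zpow_iff_modEq, hl]
    exact (Int.modEq_iff_dvd.2 hdvd).symm
  have : Finite (H.map (MonoidHom.snd ℂˣ ℂˣ)) :=
    Finite.of_surjective _ (MonoidHom.subgroupMap_surjective _ H)
  obtain ⟨ζ, hζ⟩ := (Subgroup.isCyclic_iff_exists_zpowers_eq_top _).1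
    (isCyclic_subgroup_units (H.map (MonoidHom.snd ℂˣ ℂˣ)))
  refine ⟨ζ, isOfFinOrder_iff_pow_eq_one.1 ?_, Subgroup.zpowers_zpow_prodMk_eq hH hζ⟩
  exact finite_zpowers.1 (hζ ▸ Set.toFinite _)
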